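/- For each fixed B ∈ (B₁, B̄), the map A ↦ Λ₂(A,B) is continuously differentiable on (A̲(B), Ā(B)) with ∂Λ₂(A,B)/∂A = u(A,B) − U(A,B) > 0, hence strictly increasing in A, and Λ₂(A,B) → 0 as A ↓ A̲(B). -/

import Mathlib

/-!
Fix `B` and write `g_A = A + g_0`. Since `g_0' = λ e^{-λ(x-a)} F₁(B, ·)` and `F₁(B, ·)` increases
up to `a` and decreases after it, `g_0` increases on `[x₁, x₂]` and decreases on `[x₂, ∞)`. Hence
on `[x₁, ∞)` the integrand `g_{A'} - ℓ` is nonnegative exactly on `[U(A'), u(A')]`, so its integral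
over `[U(A), u(A)]` is at most `Λ₂(A')`: this is the subgradient inequality
`Λ₂(A') - Λ₂(A) ≥ (A' - A) (u(A) - U(A))`. Applied in both directions it traps the difference
quotient between `u - U` at `A` and at `A'`, and the roots `U`, `u` depend continuously on `A`
(inverses of strictly monotone continuous functions), which gives the derivative. For the limit,
`g_A - ℓ ≤ A - A̲(B)` on `[U, u]` and `u - U` is monotone, so `0 ≤ Λ₂(A) ≤ (A - A̲(B)) · const`.
The interval `(A̲(B), Ā(B))` is nonempty because `g̃` is strictly increasing in `B`.
-/

open MeasureTheory Set Filter Topology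

noncomputable def gfun (μ σ a : ℝ) (h : ℝ → ℝ) (A B x : ℝ) : ℝ :=
  A - B * Real.exp (-(2 * μ / σ ^ 2) * (x - a)) -
    (2 * μ / σ ^ 2) / μ * ∫ y in a..x, h y * Real.exp (-(2 * μ / σ ^ 2) * (x - y))

noncomputable def F1 (μ σ a : ℝ) (h : ℝ → ℝ) (B x : ℝ) : ℝ :=
  B - 1 / μ * ∫ y in a..x, deriv h y * Real.exp ((2 * μ / σ ^ 2) * (y - a))

noncomputable def Bbar (μ σ a : ℝ) (h : ℝ → ℝ) : ℝ :=
  -(1 / μ) * ∫ y in Set.Iic a, deriv h y * Real.exp ((2 * μ / σ ^ 2) * (y - a))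

theorem setIntegral_le_setIntegral_of_nonneg_of_nonpos {X : Type*} [MeasurableSpace X]
    {ν : Measure X} {φ : X → ℝ} {s t : Set X} (hs : MeasurableSet s) (ht : MeasurableSet t)
    (hφs : IntegrableOn φ s ν) (hφt : IntegrableOn φ t ν)
    (hnonneg : ∀ x ∈ t, 0 ≤ φ x) (hnonpos : ∀ x ∈ s \ t, φ x ≤ 0) :
    ∫ x in s, φ x ∂ν ≤ ∫ x in t, φ x ∂ν := by
  rw [← integral_inter_add_sdiff ht hφs]
  have hinter : ∫ x in s ∩ t, φ x ∂ν ≤ ∫ x in t, φ x ∂ν :=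
    setIntegral_mono_set hφt ((ae_restrict_iff' ht).2 (.of_forall hnonneg))
      (.of_forall inter_subset_right)
  linarith [setIntegral_nonpos (μ := ν) (hs.diff ht) hnonpos]

theorem hasDerivAt_of_forall_sub_mul_le {Λ w : ℝ → ℝ} {S : Set ℝ} {A : ℝ} (hS : S ∈ 𝓝 A)
    (hsub : ∀ x ∈ S, ∀ y ∈ S, (y - x) * w x ≤ Λ y - Λ x) (hw : ContinuousAt w A) :
    HasDerivAt Λ (w A) A := by
  have hA : A ∈ S := mem_of_mem_nhds hS
  have hbound : ∀ᶠ y in 𝓝 A, ‖Λ y - Λ A - (y - A) • w A‖ ≤ ‖(y - A) * (w y - w A)‖ := by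
    filter_upwards [hS] with y hy
    have hlower := hsub A hA y hy
    have hupper : Λ y - Λ A - (y - A) * w A ≤ (y - A) * (w y - w A) := by
      linarith [hsub y hy A hA]
    rw [smul_eq_mul, Real.norm_eq_abs, Real.norm_eq_abs, abs_of_nonneg (by linarith)]
    exact hupper.trans (le_abs_self _)
  have hsmall : (fun y => (y - A) * (w y - w A)) =o[𝓝 A] fun y => (y - A) * 1 :=
    (Asymptotics.isBigO_refl _ _).mul_isLittleO <| (Asymptotics.isLittleO_one_iff ℝ).2 <| by
      simpa using (hw.tendsto.sub_const (w A))
  rw [hasDerivAt_iff_isLittleO]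
  simpa using (Asymptotics.IsBigO.of_bound' hbound).trans_isLittleO hsmall

section RightInverse

variable {α β : Type*} [LinearOrder α] [TopologicalSpace α] [OrderTopology α] [DenselyOrdered α]
  [LinearOrder β] [TopologicalSpace β] [OrderTopology β] {φ : α → β} {r : β → α} {I : Set α}
  {S : Set β} {y : β}

theorem StrictMonoOn.continuousAt_of_rightInvOn (hφ : StrictMonoOn φ I)
    (hφc : ContinuousAt φ (r y)) (hr : RightInvOn r φ S) (hrI : MapsTo r S I)
    (hI : I ∈ 𝓝 (r y)) (hS : S ∈ 𝓝 y) : ContinuousAt r y := by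
  have hmono : MonotoneOn r S := fun y₁ h₁ y₂ h₂ hle => by
    rwa [← hφ.le_iff_le (hrI h₁) (hrI h₂), hr h₁, hr h₂]
  refine continuousAt_of_monotoneOn_of_image_mem_nhds hmono hS ?_
  have hφS : φ ⁻¹' S ∈ 𝓝 (r y) := hφc.preimage_mem_nhds (by rwa [hr (mem_of_mem_nhds hS)])
  filter_upwards [hI, hφS] with x hxI hxS
  exact ⟨φ x, hxS, hφ.injOn (hrI hxS) hxI (hr hxS)⟩

theorem StrictAntiOn.continuousAt_of_rightInvOn (hφ : StrictAntiOn φ I)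
    (hφc : ContinuousAt φ (r y)) (hr : RightInvOn r φ S) (hrI : MapsTo r S I)
    (hI : I ∈ 𝓝 (r y)) (hS : S ∈ 𝓝 y) : ContinuousAt r y :=
  StrictMonoOn.continuousAt_of_rightInvOn (α := αᵒᵈ) (φ := φ ∘ OrderDual.ofDual)
    (r := OrderDual.toDual ∘ r) hφ.dual hφc hr hrI hI hS

end RightInverse

section Unimodal

variable {f : ℝ → ℝ} {p m U u c x : ℝ}

theorem le_iff_mem_Icc_of_unimodal (hmono : StrictMonoOn f (Icc p m))
    (hanti : StrictAntiOn f (Ici m)) (hU : U ∈ Ico p m) (hu : m < u) (hfU : f U = c)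
    (hfu : f u = c) (hx : p ≤ x) : c ≤ f x ↔ x ∈ Icc U u := by
  rcases le_total x m with hxm | hmx
  · rw [← hfU, hmono.le_iff_le (Ico_subset_Icc_self hU) ⟨hx, hxm⟩]
    exact ⟨fun hUx => ⟨hUx, hxm.trans hu.le⟩, And.left⟩
  · rw [← hfu, hanti.le_iff_ge hu.le hmx]
    exact ⟨fun hxu => ⟨hU.2.le.trans hmx, hxu⟩, And.right⟩

theorem lt_iff_mem_Ioo_of_unimodal (hmono : StrictMonoOn f (Icc p m))
    (hanti : StrictAntiOn f (Ici m)) (hU : U ∈ Ico p m) (hu : m < u) (hfU : f U = c)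
    (hfu : f u = c) (hx : p ≤ x) : c < f x ↔ x ∈ Ioo U u := by
  rcases le_total x m with hxm | hmx
  · rw [← hfU, hmono.lt_iff_lt (Ico_subset_Icc_self hU) ⟨hx, hxm⟩]
    exact ⟨fun hUx => ⟨hUx, hxm.trans_lt hu⟩, And.left⟩
  · rw [← hfu, hanti.lt_iff_gt hu.le hmx]
    exact ⟨fun hxu => ⟨hU.2.trans_le hmx, hxu⟩, And.right⟩

theorem isMaxOn_of_monotoneOn_of_antitoneOn (hmono : MonotoneOn f (Icc p m))
    (hanti : AntitoneOn f (Ici m)) : IsMaxOn f (Ici p) m := by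
  intro x hx
  rcases le_total x m with hxm | hmx
  · exact hmono ⟨hx, hxm⟩ ⟨le_trans hx hxm, le_rfl⟩ hxm
  · exact hanti (mem_Ici.2 le_rfl) hmx hmx

end Unimodal

noncomputable def levelIntegral (f U u : ℝ → ℝ) (A : ℝ) : ℝ := ∫ x in U A..u A, (A + f x)

/-- `U A < u A` are the solutions of `f = -A` on `[p, ∞)`, on either side of the maximum point
`m` of `f`. -/
structure IsLevelRoots (f U u : ℝ → ℝ) (p m : ℝ) (S : Set ℝ) : Prop where
  continuous : Continuous f
  strictMonoOn : StrictMonoOn f (Icc p m)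
  strictAntiOn : StrictAntiOn f (Ici m)
  left_mem : ∀ A ∈ S, U A ∈ Ioo p m
  lt_right : ∀ A ∈ S, m < u A
  apply_left : ∀ A ∈ S, f (U A) = -A
  apply_right : ∀ A ∈ S, f (u A) = -A

namespace IsLevelRoots

variable {f U u : ℝ → ℝ} {p m : ℝ} {S : Set ℝ} {A A' x : ℝ}

theorem left_le_right (hL : IsLevelRoots f U u p m S) (hA : A ∈ S) : U A ≤ u A :=
  ((hL.left_mem A hA).2.trans (hL.lt_right A hA)).le

theorem add_nonneg_of_mem_Icc (hL : IsLevelRoots f U u p m S) (hA : A ∈ S)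
    (hx : x ∈ Icc (U A) (u A)) : 0 ≤ A + f x := by
  have hU := hL.left_mem A hA
  have := (le_iff_mem_Icc_of_unimodal hL.strictMonoOn hL.strictAntiOn ⟨hU.1.le, hU.2⟩
    (hL.lt_right A hA) (hL.apply_left A hA) (hL.apply_right A hA) (hU.1.le.trans hx.1)).2 hx
  linarith

theorem add_nonpos_of_notMem_Ioo (hL : IsLevelRoots f U u p m S) (hA : A ∈ S) (hx : p ≤ x)
    (hxA : x ∉ Ioo (U A) (u A)) : A + f x ≤ 0 := by
  have hU := hL.left_mem A hA
  by_contra hpos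
  exact hxA ((lt_iff_mem_Ioo_of_unimodal hL.strictMonoOn hL.strictAntiOn ⟨hU.1.le, hU.2⟩
    (hL.lt_right A hA) (hL.apply_left A hA) (hL.apply_right A hA) hx).1 (by linarith))

theorem sub_mul_le_levelIntegral_sub (hL : IsLevelRoots f U u p m S) (hA : A ∈ S)
    (hA' : A' ∈ S) :
    (A' - A) * (u A - U A) ≤ levelIntegral f U u A' - levelIntegral f U u A := by
  have hshift : ∫ x in U A..u A, (A' + f x) =
      levelIntegral f U u A + (A' - A) * (u A - U A) := by
    rw [levelIntegral,
      intervalIntegral.integral_add intervalIntegrable_const (hL.continuous.intervalIntegrable _ _),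
      intervalIntegral.integral_add intervalIntegrable_const (hL.continuous.intervalIntegrable _ _),
      intervalIntegral.integral_const, intervalIntegral.integral_const, smul_eq_mul, smul_eq_mul]
    ring
  -- `A' + f` is nonnegative exactly on `[U A', u A']`, so that interval maximizes its integral.
  have hmax : ∫ x in U A..u A, (A' + f x) ≤ levelIntegral f U u A' := by
    have hint : Continuous fun x => A' + f x := continuous_const.add hL.continuous
    rw [levelIntegral, intervalIntegral.integral_of_le (hL.left_le_right hA),
      intervalIntegral.integral_of_le (hL.left_le_right hA')]
    refine setIntegral_le_setIntegral_of_nonneg_of_nonpos measurableSet_Ioc measurableSet_Ioc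
      hint.integrableOn_Ioc hint.integrableOn_Ioc
      (fun x hx => hL.add_nonneg_of_mem_Icc hA' (Ioc_subset_Icc_self hx))
      (fun x hx => hL.add_nonpos_of_notMem_Ioo hA' ((hL.left_mem A hA).1.trans hx.1.1).le
        fun hx' => hx.2 (Ioo_subset_Ioc_self hx'))
  linarith

theorem monotoneOn_sub (hL : IsLevelRoots f U u p m S) : MonotoneOn (fun A => u A - U A) S := by
  intro A hA A' hA' hle
  rcases hle.lt_or_eq with hlt | rfl
  · have h₁ := hL.sub_mul_le_levelIntegral_sub hA hA'
    have h₂ := hL.sub_mul_le_levelIntegral_sub hA' hA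
    exact le_of_mul_le_mul_left (a := A' - A) (by linarith) (sub_pos.2 hlt)
  · exact le_rfl

theorem continuousAt_left (hL : IsLevelRoots f U u p m S) (hS : IsOpen S) (hA : A ∈ S) :
    ContinuousAt U A :=
  (hL.strictMonoOn.mono Ioo_subset_Icc_self).neg.continuousAt_of_rightInvOn
    hL.continuous.neg.continuousAt (fun A hA => by simp [hL.apply_left A hA]) hL.left_mem
    (isOpen_Ioo.mem_nhds (hL.left_mem A hA)) (hS.mem_nhds hA)

theorem continuousAt_right (hL : IsLevelRoots f U u p m S) (hS : IsOpen S) (hA : A ∈ S) :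
    ContinuousAt u A :=
  (hL.strictAntiOn.mono Ioi_subset_Ici_self).neg.continuousAt_of_rightInvOn
    hL.continuous.neg.continuousAt (fun A hA => by simp [hL.apply_right A hA]) hL.lt_right
    (isOpen_Ioi.mem_nhds (hL.lt_right A hA)) (hS.mem_nhds hA)

theorem hasDerivAt_levelIntegral (hL : IsLevelRoots f U u p m S) (hS : IsOpen S) (hA : A ∈ S) :
    HasDerivAt (levelIntegral f U u) (u A - U A) A :=
  hasDerivAt_of_forall_sub_mul_le (w := fun A => u A - U A) (hS.mem_nhds hA)
    (fun _ hx _ hy => hL.sub_mul_le_levelIntegral_sub hx hy)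
    ((hL.continuousAt_right hS hA).sub (hL.continuousAt_left hS hA))

theorem continuousOn_deriv_levelIntegral (hL : IsLevelRoots f U u p m S) (hS : IsOpen S) :
    ContinuousOn (deriv (levelIntegral f U u)) S := fun _ hA =>
  ((hL.continuousAt_right hS hA).sub (hL.continuousAt_left hS hA)).continuousWithinAt.congr
    (fun _ hA' => (hL.hasDerivAt_levelIntegral hS hA').deriv)
    (hL.hasDerivAt_levelIntegral hS hA).deriv

theorem strictMonoOn_levelIntegral (hL : IsLevelRoots f U u p m S) :
    StrictMonoOn (levelIntegral f U u) S := by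
  intro A hA A' hA' hlt
  have hw : 0 < (A' - A) * (u A - U A) :=
    mul_pos (sub_pos.2 hlt) (by linarith [(hL.left_mem A hA).2, hL.lt_right A hA])
  linarith [hL.sub_mul_le_levelIntegral_sub hA hA']

theorem tendsto_levelIntegral_nhdsGT {s t : ℝ} (hL : IsLevelRoots f U u p m (Ioo s t))
    (hfm : f m ≤ -s) (hst : s < t) : Tendsto (levelIntegral f U u) (𝓝[>] s) (𝓝 0) := by
  obtain ⟨A₀, hA₀⟩ := nonempty_Ioo.2 hst
  have hbound : ∀ A ∈ Ioo s A₀,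
      0 ≤ levelIntegral f U u A ∧ levelIntegral f U u A ≤ (A - s) * (u A₀ - U A₀) := by
    intro A hA
    have hAS : A ∈ Ioo s t := ⟨hA.1, hA.2.trans hA₀.2⟩
    have hUu := hL.left_le_right hAS
    refine ⟨intervalIntegral.integral_nonneg hUu fun x hx => hL.add_nonneg_of_mem_Icc hAS hx, ?_⟩
    calc levelIntegral f U u A
        ≤ ∫ _ in U A..u A, (A - s) :=
          intervalIntegral.integral_mono_on hUu
            ((continuous_const.add hL.continuous).intervalIntegrable _ _) intervalIntegrable_const
            fun x hx => by
              have : f x ≤ f m := isMaxOn_of_monotoneOn_of_antitoneOn hL.strictMonoOn.monotoneOn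
                hL.strictAntiOn.antitoneOn (mem_Ici.2 ((hL.left_mem A hAS).1.le.trans hx.1))
              linarith
      _ = (A - s) * (u A - U A) := by
          rw [intervalIntegral.integral_const, smul_eq_mul, mul_comm]
      _ ≤ (A - s) * (u A₀ - U A₀) :=
          mul_le_mul_of_nonneg_left (hL.monotoneOn_sub hAS hA₀ hA.2.le) (by linarith [hA.1])
  have hlim : Tendsto (fun A => (A - s) * (u A₀ - U A₀)) (𝓝[>] s) (𝓝 0) := by
    have hcont : Continuous fun A => (A - s) * (u A₀ - U A₀) := by fun_prop
    simpa using (hcont.tendsto s).mono_left nhdsWithin_le_nhds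
  have hev : ∀ᶠ A in 𝓝[>] s, A ∈ Ioo s A₀ := Ioo_mem_nhdsGT hA₀.1
  exact tendsto_of_tendsto_of_tendsto_of_le_of_le' tendsto_const_nhds hlim
    (hev.mono fun A hA => (hbound A hA).1) (hev.mono fun A hA => (hbound A hA).2)

end IsLevelRoots

structure IsHoldingCost (a : ℝ) (h : ℝ → ℝ) : Prop where
  convexOn : ConvexOn ℝ univ h
  continuous : Continuous h
  nonneg : ∀ x, 0 ≤ h x
  apply_eq_zero : h a = 0
  differentiableAt : ∀ x ≠ a, DifferentiableAt ℝ h x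
  deriv_neg : ∀ x < a, deriv h x < 0
  deriv_pos : ∀ x, a < x → 0 < deriv h x

namespace IsHoldingCost

variable {a : ℝ} {h : ℝ → ℝ}

theorem monotone_deriv (hh : IsHoldingCost a h) : Monotone (deriv h) := by
  have hmin : deriv h a = 0 :=
    IsLocalMin.deriv_eq_zero (.of_forall fun x => hh.apply_eq_zero ▸ hh.nonneg x)
  intro x y hxy
  rcases lt_or_ge y a with hya | hay
  · exact (hh.convexOn.subset (subset_univ _) (convex_Iio a)).monotoneOn_deriv
      (fun z hz => hh.differentiableAt z hz.ne) (hxy.trans_lt hya) hya hxy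
  rcases lt_or_ge a x with hax | hxa
  · exact (hh.convexOn.subset (subset_univ _) (convex_Ioi a)).monotoneOn_deriv
      (fun z hz => hh.differentiableAt z hz.ne') hax (hax.trans_le hxy) hxy
  have hx : deriv h x ≤ 0 := by
    rcases hxa.lt_or_eq with hxa | rfl
    exacts [(hh.deriv_neg x hxa).le, hmin.le]
  have hy : 0 ≤ deriv h y := by
    rcases hay.lt_or_eq with hay | rfl
    exacts [(hh.deriv_pos y hay).le, hmin.ge]
  exact hx.trans hy

theorem intervalIntegrable_deriv_mul_exp (hh : IsHoldingCost a h) (L c d : ℝ) :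
    IntervalIntegrable (fun y => deriv h y * Real.exp (L * (y - a))) volume c d :=
  hh.monotone_deriv.intervalIntegrable.mul_continuousOn (by fun_prop)

theorem integral_deriv_mul_exp (hh : IsHoldingCost a h) (L x : ℝ) :
    ∫ y in a..x, deriv h y * Real.exp (L * (y - a)) =
      h x * Real.exp (L * (x - a)) - L * ∫ y in a..x, h y * Real.exp (L * (y - a)) := by
  have hE : ∀ y, HasDerivAt (fun y => Real.exp (L * (y - a))) (L * Real.exp (L * (y - a))) y :=
    fun y => by simpa [mul_comm] using ((hasDerivAt_id y).sub_const a |>.const_mul L).exp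
  have hparts := intervalIntegral.integral_mul_deriv_eq_deriv_mul_of_hasDerivAt (a := a) (b := x)
    (u := fun y => Real.exp (L * (y - a))) (v := h) (by fun_prop) hh.continuous.continuousOn
    (fun y _ => hE y) (fun y hy => (hh.differentiableAt y (by grind)).hasDerivAt)
    (Continuous.intervalIntegrable (by fun_prop) _ _) hh.monotone_deriv.intervalIntegrable
  simp only [hh.apply_eq_zero, mul_zero, sub_zero] at hparts
  rw [← intervalIntegral.integral_const_mul]
  convert hparts using 1
  · exact intervalIntegral.integral_congr fun y _ => mul_comm _ _
  · rw [mul_comm]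
    congr 1
    exact intervalIntegral.integral_congr fun y _ => by ring

end IsHoldingCost

section Model

variable {μ σ a : ℝ} {h : ℝ → ℝ}

theorem gfun_eq_add (A B x : ℝ) :
    gfun μ σ a h A B x = A + gfun μ σ a h 0 B x := by
  unfold gfun
  ring

theorem gfun_eq_exp_mul (A B x : ℝ) :
    gfun μ σ a h A B x = A - Real.exp (-(2 * μ / σ ^ 2) * (x - a)) *
      (B + 2 * μ / σ ^ 2 / μ * ∫ y in a..x, h y * Real.exp (2 * μ / σ ^ 2 * (y - a))) := by
  have hsplit : ∫ y in a..x, h y * Real.exp (-(2 * μ / σ ^ 2) * (x - y)) =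
      Real.exp (-(2 * μ / σ ^ 2) * (x - a)) *
        ∫ y in a..x, h y * Real.exp (2 * μ / σ ^ 2 * (y - a)) := by
    rw [← intervalIntegral.integral_const_mul]
    refine intervalIntegral.integral_congr fun y _ => ?_
    rw [mul_left_comm, ← Real.exp_add]
    ring_nf
  rw [gfun, hsplit]
  ring

theorem F1_eq (hh : IsHoldingCost a h) (B x : ℝ) :
    F1 μ σ a h B x = B + 2 * μ / σ ^ 2 / μ * (∫ y in a..x, h y * Real.exp (2 * μ / σ ^ 2 * (y - a)))
      - h x * Real.exp (2 * μ / σ ^ 2 * (x - a)) / μ := by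
  rw [F1, hh.integral_deriv_mul_exp]
  ring

theorem exp_neg_mul_mul_exp (L x : ℝ) : Real.exp (-L * x) * Real.exp (L * x) = 1 := by
  rw [← Real.exp_add, neg_mul, neg_add_cancel, Real.exp_zero]

theorem hasDerivAt_gfun (hh : IsHoldingCost a h) (A B x : ℝ) :
    HasDerivAt (gfun μ σ a h A B)
      (2 * μ / σ ^ 2 * Real.exp (-(2 * μ / σ ^ 2) * (x - a)) * F1 μ σ a h B x) x := by
  rw [F1_eq hh, show gfun μ σ a h A B = _ from funext (gfun_eq_exp_mul A B)]
  set L := 2 * μ / σ ^ 2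
  have hE : HasDerivAt (fun x => Real.exp (-L * (x - a))) (-L * Real.exp (-L * (x - a))) x := by
    simpa [mul_comm] using ((hasDerivAt_id x).sub_const a |>.const_mul (-L)).exp
  have hH : HasDerivAt (fun x => ∫ y in a..x, h y * Real.exp (L * (y - a)))
      (h x * Real.exp (L * (x - a))) x :=
    ((hh.continuous.mul (by fun_prop)).integral_hasStrictDerivAt a x).hasDerivAt
  have hg := (hE.mul ((hasDerivAt_const x B).add (hH.const_mul (L / μ)))).const_sub A
  refine hg.congr_deriv ?_
  simp only [Pi.add_apply]
  ring

theorem continuous_gfun (hh : IsHoldingCost a h) (A B : ℝ) : Continuous (gfun μ σ a h A B) :=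
  continuous_iff_continuousAt.2 fun x => (hasDerivAt_gfun hh A B x).continuousAt

theorem gfun_eq_of_F1_eq_zero (hh : IsHoldingCost a h) {B c : ℝ} (hc : F1 μ σ a h B c = 0)
    (A : ℝ) : gfun μ σ a h A B c = A - h c / μ := by
  rw [F1_eq hh] at hc
  rw [gfun_eq_exp_mul]
  linear_combination (-Real.exp (-(2 * μ / σ ^ 2) * (c - a))) * hc
    - (h c / μ) * exp_neg_mul_mul_exp (2 * μ / σ ^ 2) (c - a)

theorem F1_sub_F1 (hh : IsHoldingCost a h) (B x x' : ℝ) :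
    F1 μ σ a h B x' - F1 μ σ a h B x =
      -(1 / μ) * ∫ y in x..x', deriv h y * Real.exp (2 * μ / σ ^ 2 * (y - a)) := by
  rw [F1, F1, ← intervalIntegral.integral_interval_sub_left
    (hh.intervalIntegrable_deriv_mul_exp _ a x') (hh.intervalIntegrable_deriv_mul_exp _ a x)]
  ring

theorem F1_strictMonoOn_Iic (hh : IsHoldingCost a h) (hμ : 0 < μ) (B : ℝ) :
    StrictMonoOn (F1 μ σ a h B) (Iic a) := by
  intro x _ x' hx' hlt
  have hI : 0 < ∫ y in x..x', -(deriv h y * Real.exp (2 * μ / σ ^ 2 * (y - a))) :=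
    intervalIntegral.intervalIntegral_pos_of_pos_on (hh.intervalIntegrable_deriv_mul_exp _ x x').neg
      (fun y hy => neg_pos.2 (mul_neg_of_neg_of_pos
        (hh.deriv_neg y (hy.2.trans_le hx')) (Real.exp_pos _))) hlt
  rw [intervalIntegral.integral_neg, neg_pos] at hI
  rw [← sub_pos, F1_sub_F1 hh]
  exact mul_pos_of_neg_of_neg (neg_neg_of_pos (one_div_pos.2 hμ)) hI

theorem F1_strictAntiOn_Ici (hh : IsHoldingCost a h) (hμ : 0 < μ) (B : ℝ) :
    StrictAntiOn (F1 μ σ a h B) (Ici a) := by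
  intro x hx x' _ hlt
  have hI : 0 < ∫ y in x..x', deriv h y * Real.exp (2 * μ / σ ^ 2 * (y - a)) :=
    intervalIntegral.intervalIntegral_pos_of_pos_on (hh.intervalIntegrable_deriv_mul_exp _ x x')
      (fun y hy => mul_pos (hh.deriv_pos y (lt_of_le_of_lt hx hy.1)) (Real.exp_pos _)) hlt
  rw [← sub_neg, F1_sub_F1 hh]
  exact mul_neg_of_neg_of_pos (neg_neg_of_pos (one_div_pos.2 hμ)) hI

theorem gfun_strictMonoOn_of_F1_pos (hh : IsHoldingCost a h) (hμ : 0 < μ) (hσ : 0 < σ)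
    {B : ℝ} {D : Set ℝ} (hD : Convex ℝ D) (hF : ∀ x ∈ interior D, 0 < F1 μ σ a h B x) (A : ℝ) :
    StrictMonoOn (gfun μ σ a h A B) D :=
  strictMonoOn_of_deriv_pos hD (continuous_gfun hh A B).continuousOn fun x hx => by
    rw [(hasDerivAt_gfun hh A B x).deriv]
    exact mul_pos (by positivity) (hF x hx)

theorem gfun_strictAntiOn_of_F1_neg (hh : IsHoldingCost a h) (hμ : 0 < μ) (hσ : 0 < σ)
    {B : ℝ} {D : Set ℝ} (hD : Convex ℝ D) (hF : ∀ x ∈ interior D, F1 μ σ a h B x < 0) (A : ℝ) :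
    StrictAntiOn (gfun μ σ a h A B) D :=
  strictAntiOn_of_deriv_neg hD (continuous_gfun hh A B).continuousOn fun x hx => by
    rw [(hasDerivAt_gfun hh A B x).deriv]
    exact mul_neg_of_pos_of_neg (by positivity) (hF x hx)

theorem gfun_strictAntiOn_Iic (hh : IsHoldingCost a h) (hμ : 0 < μ) (hσ : 0 < σ) {B x₁ : ℝ}
    (hx₁ : x₁ < a) (hF₁ : F1 μ σ a h B x₁ = 0) (A : ℝ) :
    StrictAntiOn (gfun μ σ a h A B) (Iic x₁) :=
  gfun_strictAntiOn_of_F1_neg hh hμ hσ (convex_Iic x₁) (fun x hx => by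
    rw [interior_Iic] at hx
    exact hF₁ ▸ F1_strictMonoOn_Iic hh hμ B (hx.le.trans hx₁.le) hx₁.le hx) A

theorem gfun_strictMonoOn_Icc (hh : IsHoldingCost a h) (hμ : 0 < μ) (hσ : 0 < σ)
    {B x₁ x₂ : ℝ} (hx₁ : x₁ < a) (hF₁ : F1 μ σ a h B x₁ = 0) (hx₂ : a < x₂)
    (hF₂ : F1 μ σ a h B x₂ = 0) (A : ℝ) : StrictMonoOn (gfun μ σ a h A B) (Icc x₁ x₂) :=
  gfun_strictMonoOn_of_F1_pos hh hμ hσ (convex_Icc x₁ x₂) (fun x hx => by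
    rw [interior_Icc] at hx
    exact (lt_iff_mem_Ioo_of_unimodal ((F1_strictMonoOn_Iic hh hμ B).mono Icc_subset_Iic_self)
      (F1_strictAntiOn_Ici hh hμ B) ⟨le_rfl, hx₁⟩ hx₂ hF₁ hF₂ hx.1.le).2 hx) A

theorem gfun_strictAntiOn_Ici (hh : IsHoldingCost a h) (hμ : 0 < μ) (hσ : 0 < σ) {B x₂ : ℝ}
    (hx₂ : a < x₂) (hF₂ : F1 μ σ a h B x₂ = 0) (A : ℝ) :
    StrictAntiOn (gfun μ σ a h A B) (Ici x₂) :=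
  gfun_strictAntiOn_of_F1_neg hh hμ hσ (convex_Ici x₂) (fun x hx => by
    rw [interior_Ici] at hx
    exact hF₂ ▸ F1_strictAntiOn_Ici hh hμ B hx₂.le (hx₂.le.trans hx.le) hx) A

theorem gfun_sub_gfun_lt (hh : IsHoldingCost a h) (hμ : 0 < μ) (hσ : 0 < σ)
    {B B' x₁ x₂ x₁' x₂' : ℝ} (hB : B < B') (hx₁ : x₁ < a) (hx₂ : a < x₂) (hx₁' : x₁' < a)
    (hF₁' : F1 μ σ a h B' x₁' = 0) (hx₂' : a < x₂') (hF₂' : F1 μ σ a h B' x₂' = 0) :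
    gfun μ σ a h 0 B x₂ - gfun μ σ a h 0 B x₁ <
      gfun μ σ a h 0 B' x₂' - gfun μ σ a h 0 B' x₁' := by
  have hshift : ∀ x, gfun μ σ a h 0 B' x =
      gfun μ σ a h 0 B x - (B' - B) * Real.exp (-(2 * μ / σ ^ 2) * (x - a)) := fun x => by
    unfold gfun
    ring
  have hmax : gfun μ σ a h 0 B' x₂ ≤ gfun μ σ a h 0 B' x₂' :=
    isMaxOn_of_monotoneOn_of_antitoneOn
      (gfun_strictMonoOn_Icc hh hμ hσ hx₁' hF₁' hx₂' hF₂' 0).monotoneOn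
      (gfun_strictAntiOn_Ici hh hμ hσ hx₂' hF₂' 0).antitoneOn (mem_Ici.2 (hx₁'.trans hx₂).le)
  have hmin : gfun μ σ a h 0 B' x₁' ≤ gfun μ σ a h 0 B' x₁ := by
    rcases le_total x₁ x₁' with hle | hle
    · exact (gfun_strictAntiOn_Iic hh hμ hσ hx₁' hF₁' 0).antitoneOn hle (mem_Iic.2 le_rfl) hle
    · exact (gfun_strictMonoOn_Icc hh hμ hσ hx₁' hF₁' hx₂' hF₂' 0).monotoneOn
        ⟨le_rfl, (hx₁'.trans hx₂').le⟩ ⟨hle, (hx₁.trans hx₂').le⟩ hle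
  have hexp : Real.exp (-(2 * μ / σ ^ 2) * (x₂ - a)) < Real.exp (-(2 * μ / σ ^ 2) * (x₁ - a)) :=
    Real.exp_lt_exp.2 (mul_lt_mul_of_neg_left (by linarith) (neg_neg_of_pos (by positivity)))
  nlinarith [hshift x₁, hshift x₂, mul_pos (sub_pos.2 hB) (sub_pos.2 hexp)]

theorem isLevelRoots_gfun (hh : IsHoldingCost a h) (hμ : 0 < μ) (hσ : 0 < σ)
    {B x₁ x₂ ℓ : ℝ} {U u : ℝ → ℝ} {S : Set ℝ} (hx₁ : x₁ < a) (hF₁ : F1 μ σ a h B x₁ = 0)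
    (hx₂ : a < x₂) (hF₂ : F1 μ σ a h B x₂ = 0)
    (hroots : ∀ A ∈ S, x₁ < U A ∧ U A < x₂ ∧ x₂ < u A ∧
      gfun μ σ a h A B (U A) = ℓ ∧ gfun μ σ a h A B (u A) = ℓ) :
    IsLevelRoots (fun x => gfun μ σ a h 0 B x - ℓ) U u x₁ x₂ S where
  continuous := (continuous_gfun hh 0 B).sub continuous_const
  strictMonoOn := (gfun_strictMonoOn_Icc hh hμ hσ hx₁ hF₁ hx₂ hF₂ 0).add_const (-ℓ)
  strictAntiOn := (gfun_strictAntiOn_Ici hh hμ hσ hx₂ hF₂ 0).add_const (-ℓ)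
  left_mem A hA := ⟨(hroots A hA).1, (hroots A hA).2.1⟩
  lt_right A hA := (hroots A hA).2.2.1
  apply_left A hA := by
    have := (hroots A hA).2.2.2.1
    rw [gfun_eq_add] at this
    linarith
  apply_right A hA := by
    have := (hroots A hA).2.2.2.2
    rw [gfun_eq_add] at this
    linarith

end Model

theorem stmt11_general (μ σ a : ℝ) (h : ℝ → ℝ)
    (hμ : 0 < μ) (hσ : 0 < σ)
    (hconv : ConvexOn ℝ Set.univ h)
    (hcont : Continuous h)
    (hnonneg : ∀ x, 0 ≤ h x)
    (ha : h a = 0)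
    (hC2 : ∀ x : ℝ, x ≠ a → ContDiffAt ℝ 2 h x)
    (hneg : ∀ x, x < a → deriv h x < 0)
    (hpos : ∀ x, a < x → 0 < deriv h x)
    (x1 x2 : ℝ → ℝ)
    (hx1 : ∀ B ∈ Set.Ioo 0 (Bbar μ σ a h), x1 B < a ∧ F1 μ σ a h B (x1 B) = 0)
    (hx2 : ∀ B : ℝ, 0 < B → a < x2 B ∧ F1 μ σ a h B (x2 B) = 0)
    (k ℓ : ℝ) (B₁ : ℝ)
    (hB₁ : B₁ ∈ Set.Ioo 0 (Bbar μ σ a h) ∧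
      gfun μ σ a h 0 B₁ (x2 B₁) - gfun μ σ a h 0 B₁ (x1 B₁) = k + ℓ)
    (Ufun ufun : ℝ → ℝ → ℝ)
    (hUu : ∀ B ∈ Set.Ioo B₁ (Bbar μ σ a h),
      ∀ A ∈ Set.Ioc (h (x2 B) / μ + ℓ) (h (x1 B) / μ - k),
        x1 B < Ufun A B ∧ Ufun A B < x2 B ∧ x2 B < ufun A B ∧
        gfun μ σ a h A B (Ufun A B) = ℓ ∧ gfun μ σ a h A B (ufun A B) = ℓ ∧
        0 < deriv (gfun μ σ a h A B) (Ufun A B) ∧ deriv (gfun μ σ a h A B) (ufun A B) < 0)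
    :
    ∀ B ∈ Set.Ioo B₁ (Bbar μ σ a h),
      (∀ A ∈ Set.Ioo (h (x2 B) / μ + ℓ) (h (x1 B) / μ - k),
         HasDerivAt (fun A₀ => ∫ x in Ufun A₀ B..ufun A₀ B, (gfun μ σ a h A₀ B x - ℓ))
           (ufun A B - Ufun A B) A ∧
         0 < ufun A B - Ufun A B) ∧
      ContinuousOn (deriv (fun A₀ => ∫ x in Ufun A₀ B..ufun A₀ B, (gfun μ σ a h A₀ B x - ℓ)))
        (Set.Ioo (h (x2 B) / μ + ℓ) (h (x1 B) / μ - k)) ∧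
      StrictMonoOn (fun A₀ => ∫ x in Ufun A₀ B..ufun A₀ B, (gfun μ σ a h A₀ B x - ℓ))
        (Set.Ioo (h (x2 B) / μ + ℓ) (h (x1 B) / μ - k)) ∧
      Tendsto (fun A₀ => ∫ x in Ufun A₀ B..ufun A₀ B, (gfun μ σ a h A₀ B x - ℓ))
        (nhdsWithin (h (x2 B) / μ + ℓ) (Set.Ioi (h (x2 B) / μ + ℓ))) (nhds 0) := by
  intro B hB
  have hB₀ : B ∈ Ioo 0 (Bbar μ σ a h) := ⟨hB₁.1.1.trans hB.1, hB.2⟩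
  have hh : IsHoldingCost a h := ⟨hconv, hcont, hnonneg, ha,
    fun x hx => (hC2 x hx).differentiableAt (by norm_num), hneg, hpos⟩
  obtain ⟨hx1a, hx1B⟩ := hx1 B hB₀
  obtain ⟨hx2a, hx2B⟩ := hx2 B hB₀.1
  have hL := isLevelRoots_gfun (S := Ioo (h (x2 B) / μ + ℓ) (h (x1 B) / μ - k)) (U := (Ufun · B))
    (u := (ufun · B)) hh hμ hσ hx1a hx1B hx2a hx2B fun A hA => by
      obtain ⟨hU₁, hU₂, hu, hgU, hgu, -, -⟩ := hUu B hB A (Ioo_subset_Ioc_self hA)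
      exact ⟨hU₁, hU₂, hu, hgU, hgu⟩
  have hst : h (x2 B) / μ + ℓ < h (x1 B) / μ - k := by
    have := gfun_sub_gfun_lt hh hμ hσ hB.1 (hx1 B₁ hB₁.1).1 (hx2 B₁ hB₁.1.1).1 hx1a hx1B hx2a hx2B
    rw [hB₁.2, gfun_eq_of_F1_eq_zero hh hx1B, gfun_eq_of_F1_eq_zero hh hx2B] at this
    linarith
  have hΛ : (fun A₀ => ∫ x in Ufun A₀ B..ufun A₀ B, (gfun μ σ a h A₀ B x - ℓ)) =
      levelIntegral (fun x => gfun μ σ a h 0 B x - ℓ) (Ufun · B) (ufun · B) := by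
    funext A₀
    simp only [levelIntegral, gfun_eq_add (A := A₀), add_sub_assoc]
  have hfm : gfun μ σ a h 0 B (x2 B) - ℓ ≤ -(h (x2 B) / μ + ℓ) := by
    rw [gfun_eq_of_F1_eq_zero hh hx2B]
    linarith
  rw [hΛ]
  exact ⟨fun A hA => ⟨hL.hasDerivAt_levelIntegral isOpen_Ioo hA,
      sub_pos.2 ((hL.left_mem A hA).2.trans (hL.lt_right A hA))⟩,
    hL.continuousOn_deriv_levelIntegral isOpen_Ioo, hL.strictMonoOn_levelIntegral,
    hL.tendsto_levelIntegral_nhdsGT hfm hst⟩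

theorem stmt11 (μ σ a : ℝ) (h : ℝ → ℝ)
    (hμ : 0 < μ) (hσ : 0 < σ)
    (hconv : ConvexOn ℝ Set.univ h)
    (hcont : Continuous h)
    (hnonneg : ∀ x, 0 ≤ h x)
    (ha : h a = 0)
    (hC2 : ∀ x : ℝ, x ≠ a → ContDiffAt ℝ 2 h x)
    (hneg : ∀ x, x < a → deriv h x < 0)
    (hpos : ∀ x, a < x → 0 < deriv h x)
    (hint : IntegrableOn (fun y => |deriv h y| * Real.exp ((2 * μ / σ ^ 2) * (y - a))) (Set.Iic a))
    (x1 x2 : ℝ → ℝ)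
    (hx1 : ∀ B ∈ Set.Ioo 0 (Bbar μ σ a h), x1 B < a ∧ F1 μ σ a h B (x1 B) = 0)
    (hx2 : ∀ B : ℝ, 0 < B → a < x2 B ∧ F1 μ σ a h B (x2 B) = 0)
    (k ℓ : ℝ) (hk : 0 < k) (hl : 0 < ℓ) (B₁ : ℝ)
    (hB₁ : B₁ ∈ Set.Ioo 0 (Bbar μ σ a h) ∧
      gfun μ σ a h 0 B₁ (x2 B₁) - gfun μ σ a h 0 B₁ (x1 B₁) = k + ℓ)
    (Ufun ufun : ℝ → ℝ → ℝ)
    (hUu : ∀ B ∈ Set.Ioo B₁ (Bbar μ σ a h),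
      ∀ A ∈ Set.Ioc (h (x2 B) / μ + ℓ) (h (x1 B) / μ - k),
        x1 B < Ufun A B ∧ Ufun A B < x2 B ∧ x2 B < ufun A B ∧
        gfun μ σ a h A B (Ufun A B) = ℓ ∧ gfun μ σ a h A B (ufun A B) = ℓ ∧
        0 < deriv (gfun μ σ a h A B) (Ufun A B) ∧ deriv (gfun μ σ a h A B) (ufun A B) < 0)
    :
    ∀ B ∈ Set.Ioo B₁ (Bbar μ σ a h),
      (∀ A ∈ Set.Ioo (h (x2 B) / μ + ℓ) (h (x1 B) / μ - k),
         HasDerivAt (fun A₀ => ∫ x in Ufun A₀ B..ufun A₀ B, (gfun μ σ a h A₀ B x - ℓ))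
           (ufun A B - Ufun A B) A ∧
         0 < ufun A B - Ufun A B) ∧
      ContinuousOn (deriv (fun A₀ => ∫ x in Ufun A₀ B..ufun A₀ B, (gfun μ σ a h A₀ B x - ℓ)))
        (Set.Ioo (h (x2 B) / μ + ℓ) (h (x1 B) / μ - k)) ∧
      StrictMonoOn (fun A₀ => ∫ x in Ufun A₀ B..ufun A₀ B, (gfun μ σ a h A₀ B x - ℓ))
        (Set.Ioo (h (x2 B) / μ + ℓ) (h (x1 B) / μ - k)) ∧
      Tendsto (fun A₀ => ∫ x in Ufun A₀ B..ufun A₀ B, (gfun μ σ a h A₀ B x - ℓ))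
        (nhdsWithin (h (x2 B) / μ + ℓ) (Set.Ioi (h (x2 B) / μ + ℓ))) (nhds 0) :=
  stmt11_general μ σ a h hμ hσ hconv hcont hnonneg ha hC2 hneg hpos x1 x2 hx1 hx2 k ℓ B₁ hB₁ Ufun
    ufun hUu
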